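/- arXiv:2001.11990 — 5 statements merged into one kernel-verified Lean document; each statement's English description precedes it below -/
import Mathlib

section
/- Let 𝒳 and 𝒵 be finite sets with 𝒵 ⊆ ℝ, let f : 𝒳 × 𝒵 → ℝ, and let z_(1) ≤ ... ≤ z_(m) enumerate 𝒵 in nondecreasing order. Let f̃ : 𝒳 × 𝒵 → ℝ be a function that minimizes ||f − f'||² = Σ_{x ∈ 𝒳, z ∈ 𝒵} (f(x,z) − f'(x,z))² over all functions f' : 𝒳 × 𝒵 → ℝ satisfying the monotonicity constraints f'(x, j) ≤ f'(x, k) for all x ∈ 𝒳 and all j, k ∈ 𝒵 with j ≤ k. Then for every x ∈ 𝒳, f̃(x, z_(1)) ≤ f(x, z_(1)) and f̃(x, z_(m)) ≥ f(x, z_(m)). -/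
/-!
If `ftil x₀` exceeded `f x₀` at the least point `z₀` of `Z`, lowering `ftil x₀ z₀` to
`f x₀ z₀` would keep the function monotone in `z` and strictly decrease the squared error,
contradicting minimality. The largest point is symmetric, raising the value instead.
-/

open Function

section UpdateMonotoneOn

variable {α β : Type*} [PartialOrder α] [Preorder β] [DecidableEq α]
  {φ : α → β} {s : Set α} {a : α} {b : β}

theorem MonotoneOn.update_of_isLeast (hφ : MonotoneOn φ s) (ha : IsLeast s a)
    (hb : b ≤ φ a) : MonotoneOn (update φ a b) s := by
  intro x hx y hy hxy
  rcases eq_or_ne y a with rfl | hya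
  · simp [le_antisymm hxy (ha.2 hx)]
  rcases eq_or_ne x a with rfl | hxa
  · simpa [hya] using hb.trans (hφ hx hy hxy)
  · simpa [hxa, hya] using hφ hx hy hxy

theorem MonotoneOn.update_of_isGreatest (hφ : MonotoneOn φ s) (ha : IsGreatest s a)
    (hb : φ a ≤ b) : MonotoneOn (update φ a b) s := by
  intro x hx y hy hxy
  rcases eq_or_ne x a with rfl | hxa
  · simp [le_antisymm (ha.2 hy) hxy]
  rcases eq_or_ne y a with rfl | hya
  · simpa [hxa] using (hφ hx hy hxy).trans hb
  · simpa [hxa, hya] using hφ hx hy hxy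

end UpdateMonotoneOn

section UpdateCurried

variable {ι κ : Type*} [DecidableEq ι]

theorem monotoneOn_update_apply [Preorder κ] {g : ι → κ → ℝ} {s : Set κ} {i : ι}
    {φ : κ → ℝ} (hg : ∀ x, MonotoneOn (g x) s) (hφ : MonotoneOn φ s) (x : ι) :
    MonotoneOn (update g i φ x) s := by
  rcases eq_or_ne x i with rfl | hx
  · simpa using hφ
  · simpa [hx] using hg x

theorem sum_sq_sub_update_lt [Fintype ι] [DecidableEq κ] (s : Finset κ) (f g : ι → κ → ℝ)
    {i : ι} {k : κ} (hk : k ∈ s) (hne : g i k ≠ f i k) :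
    ∑ x, ∑ z ∈ s, (f x z - update g i (update (g i) k (f i k)) x z) ^ 2
      < ∑ x, ∑ z ∈ s, (f x z - g x z) ^ 2 := by
  set h := update g i (update (g i) k (f i k))
  have h_le : ∀ x z, (f x z - h x z) ^ 2 ≤ (f x z - g x z) ^ 2 := by
    intro x z
    rcases eq_or_ne x i with rfl | hx
    · rcases eq_or_ne z k with rfl | hz
      · simp [h, sq_nonneg]
      · simp [h, hz]
    · simp [h, hx]
  have h_lt : (f i k - h i k) ^ 2 < (f i k - g i k) ^ 2 := by
    rw [show h i k = f i k by simp [h], sub_self, zero_pow two_ne_zero]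
    exact sq_pos_of_ne_zero (sub_ne_zero.2 hne.symm)
  refine Finset.sum_lt_sum (fun x _ => Finset.sum_le_sum fun z _ => h_le x z)
    ⟨i, Finset.mem_univ i, Finset.sum_lt_sum (fun z _ => h_le i z) ⟨k, hk, h_lt⟩⟩

end UpdateCurried

/-- If `ftil` is a least-squares projection of `f` onto the functions on `𝒳 × 𝒵`
(`𝒳` finite, `𝒵 ⊆ ℝ` a finite set) that are monotonically nondecreasing in the second
argument, then at the smallest element of `𝒵` the projection does not exceed `f`, and at
the largest element of `𝒵` it is at least `f`, pointwise in `x`. -/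
theorem monotone_projection_endpoints
    {𝒳 : Type*} [Fintype 𝒳]
    (Z : Finset ℝ) (hZ : Z.Nonempty)
    (f ftil : 𝒳 → ℝ → ℝ)
    (hmono : ∀ x : 𝒳, ∀ j ∈ Z, ∀ k ∈ Z, j ≤ k → ftil x j ≤ ftil x k)
    (hmin : ∀ g : 𝒳 → ℝ → ℝ,
      (∀ x : 𝒳, ∀ j ∈ Z, ∀ k ∈ Z, j ≤ k → g x j ≤ g x k) →
      (∑ x : 𝒳, ∑ z ∈ Z, (f x z - ftil x z) ^ 2)
        ≤ ∑ x : 𝒳, ∑ z ∈ Z, (f x z - g x z) ^ 2) :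
    ∀ x : 𝒳, ftil x (Z.min' hZ) ≤ f x (Z.min' hZ)
      ∧ f x (Z.max' hZ) ≤ ftil x (Z.max' hZ) := by
  classical
  intro x
  constructor <;> by_contra! hlt
  · have hg := monotoneOn_update_apply (i := x) hmono
      (MonotoneOn.update_of_isLeast (hmono x) (Z.isLeast_min' hZ) hlt.le)
    exact (hmin _ hg).not_gt
      (sum_sq_sub_update_lt Z f ftil (Z.min'_mem hZ) hlt.ne')
  · have hg := monotoneOn_update_apply (i := x) hmono
      (MonotoneOn.update_of_isGreatest (hmono x) (Z.isGreatest_max' hZ) hlt.le)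
    exact (hmin _ hg).not_gt
      (sum_sq_sub_update_lt Z f ftil (Z.max'_mem hZ) hlt.ne)
end

section
/- Let 𝒳 and 𝒵 be finite sets with 𝒵 ⊆ ℝ, let f : 𝒳 × 𝒵 → ℝ, and let z_(1) ≤ ... ≤ z_(m) enumerate 𝒵 in nondecreasing order. Let p : 𝒳 × 𝒵 → [0,1] assign conditional probabilities P(X = x | Z = z) with Σ_{x ∈ 𝒳} p(x, z) = 1 for each z, and define E[g(X,Z) | Z = z] = Σ_{x ∈ 𝒳} g(x, z) p(x, z) for any g : 𝒳 × 𝒵 → ℝ. Define the average statistical parity violation R_g = (1/m) Σ_{i=1}^{m-1} ( E[g(X,Z) | Z = z_(i)] − E[g(X,Z) | Z = z_(i+1)] ). Let f̃ be a minimizer of Σ_{x,z} (f(x,z) − f'(x,z))² over all f' : 𝒳 × 𝒵 → ℝ satisfying f'(x, j) ≤ f'(x, k) for all x ∈ 𝒳 and all j ≤ k in 𝒵. Then R_{f̃} ≤ R_f. -/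
/-! Raising the projection at the largest value of `Z`, or lowering it at the smallest, keeps it
monotone, so by minimality it already lies above `f` at `z_(m)` and below `f` at `z_(1)`. The
average violation telescopes to `(E[g | Z = z_(1)] - E[g | Z = z_(m)]) / m`, and since the weights
`p` are nonnegative this is at most as large for `f̃` as for `f`. -/
open Finset Function

theorem Fin.sum_univ_castSucc_sub_succ {M : Type*} [AddCommGroup M] :
    ∀ {n : ℕ} (G : Fin (n + 1) → M), ∑ i : Fin n, (G i.castSucc - G i.succ) = G 0 - G (last n)
  | 0, _ => by simp
  | n + 1, G => by
    rw [Fin.sum_univ_castSucc]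
    simp only [Fin.succ_castSucc]
    rw [Fin.sum_univ_castSucc_sub_succ (fun i => G i.castSucc)]
    simp

section LeastSquares

variable {ι : Type*} [Fintype ι] [DecidableEq ι]

theorem sum_sq_sub_update_self (u w : ι → ℝ) (i : ι) :
    ∑ j, (u j - update w i (u i) j) ^ 2 = ∑ j, (u j - w j) ^ 2 - (u i - w i) ^ 2 := by
  have : (fun j => (u j - update w i (u i) j) ^ 2) = update (fun j => (u j - w j) ^ 2) i 0 := by
    ext j; rcases eq_or_ne j i with rfl | hj <;> simp [*]
  rw [this, sum_update_of_mem (mem_univ i), ← sum_erase_eq_sub (mem_univ i)]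
  simp [sdiff_singleton_eq_erase]

theorem eq_of_isMinOn_sum_sq_of_update_mem {S : Set (ι → ℝ)} {u w : ι → ℝ}
    (hw : IsMinOn (fun v => ∑ j, (u j - v j) ^ 2) S w) {i : ι} (hi : update w i (u i) ∈ S) :
    w i = u i := by
  have hle := isMinOn_iff.1 hw _ hi
  rw [sum_sq_sub_update_self] at hle
  have hsq : (u i - w i) ^ 2 = 0 := le_antisymm (by linarith) (sq_nonneg _)
  linarith [pow_eq_zero_iff two_ne_zero |>.1 hsq]

end LeastSquares

section Monotone

variable {α β : Type*} [PartialOrder α] [Preorder β] [DecidableEq α] {φ : α → β} {a : α} {c : β}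

theorem Monotone.update_of_isMax (hφ : Monotone φ) (ha : IsMax a) (hc : φ a ≤ c) :
    Monotone (update φ a c) := by
  intro b b' hbb'
  rcases eq_or_ne b' a with rfl | hb'
  · rcases eq_or_ne b b' with rfl | hb
    · rfl
    · simpa [hb] using (hφ hbb').trans hc
  · have hb : b ≠ a := by rintro rfl; exact hb' (ha.eq_of_le hbb').symm
    simpa [hb, hb'] using hφ hbb'

theorem Monotone.update_of_isMin (hφ : Monotone φ) (ha : IsMin a) (hc : c ≤ φ a) :
    Monotone (update φ a c) := by
  intro b b' hbb'
  rcases eq_or_ne b a with rfl | hb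
  · rcases eq_or_ne b' b with rfl | hb'
    · rfl
    · simpa [hb'] using hc.trans (hφ hbb')
  · have hb' : b' ≠ a := by rintro rfl; exact hb (ha.eq_of_ge hbb').symm
    simpa [hb, hb'] using hφ hbb'

end Monotone

def monotoneInSnd (𝒳 α : Type*) [Preorder α] : Set (𝒳 × α → ℝ) :=
  {v | ∀ x, Monotone fun a => v (x, a)}

theorem update_mem_monotoneInSnd {𝒳 α : Type*} [DecidableEq 𝒳] [Preorder α] [DecidableEq α]
    {v : 𝒳 × α → ℝ}
    (hv : v ∈ monotoneInSnd 𝒳 α) {x : 𝒳} {a : α} {c : ℝ}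
    (h : Monotone (update (fun b => v (x, b)) a c)) : update v (x, a) c ∈ monotoneInSnd 𝒳 α := by
  intro y
  rcases eq_or_ne y x with rfl | hy
  · convert h using 1
    ext b
    rcases eq_or_ne b a with rfl | hb <;> simp [*]
  · simpa [hy] using hv y

section MonotoneProjection

variable {𝒳 α : Type*} [Fintype 𝒳] [Fintype α] [PartialOrder α] {u w : 𝒳 × α → ℝ}

theorem le_of_isMinOn_monotoneInSnd_of_isMax
    (hw : IsMinOn (fun v => ∑ q, (u q - v q) ^ 2) (monotoneInSnd 𝒳 α) w)
    (hwS : w ∈ monotoneInSnd 𝒳 α) {a : α} (ha : IsMax a) (x : 𝒳) : u (x, a) ≤ w (x, a) := by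
  classical
  by_contra! h
  exact h.ne (eq_of_isMinOn_sum_sq_of_update_mem hw
    (update_mem_monotoneInSnd hwS ((hwS x).update_of_isMax ha h.le)))

theorem le_of_isMinOn_monotoneInSnd_of_isMin
    (hw : IsMinOn (fun v => ∑ q, (u q - v q) ^ 2) (monotoneInSnd 𝒳 α) w)
    (hwS : w ∈ monotoneInSnd 𝒳 α) {a : α} (ha : IsMin a) (x : 𝒳) : w (x, a) ≤ u (x, a) := by
  classical
  by_contra! h
  exact h.ne' (eq_of_isMinOn_sum_sq_of_update_mem hw
    (update_mem_monotoneInSnd hwS ((hwS x).update_of_isMin ha h.le)))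

end MonotoneProjection

theorem monotone_projection_average_parity_violation_le_general
    {𝒳 : Type*} [Fintype 𝒳]
    (n : ℕ) (z : Fin (n + 1) → ℝ) (hz : StrictMono z)
    (p : 𝒳 → ℝ → ℝ)
    (hp0 : ∀ (x : 𝒳) (i : Fin (n + 1)), 0 ≤ p x (z i))
    (f ftil : 𝒳 → ℝ → ℝ)
    (hmono : ∀ (x : 𝒳) (i j : Fin (n + 1)), i ≤ j → ftil x (z i) ≤ ftil x (z j))
    (hmin : ∀ g : 𝒳 → ℝ → ℝ,
      (∀ (x : 𝒳) (i j : Fin (n + 1)), i ≤ j → g x (z i) ≤ g x (z j)) →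
      (∑ x : 𝒳, ∑ i : Fin (n + 1), (f x (z i) - ftil x (z i)) ^ 2)
        ≤ ∑ x : 𝒳, ∑ i : Fin (n + 1), (f x (z i) - g x (z i)) ^ 2) :
    (1 / (n + 1 : ℝ)) * ∑ i : Fin n,
        ((∑ x : 𝒳, ftil x (z i.castSucc) * p x (z i.castSucc))
          - ∑ x : 𝒳, ftil x (z i.succ) * p x (z i.succ))
      ≤ (1 / (n + 1 : ℝ)) * ∑ i : Fin n,
        ((∑ x : 𝒳, f x (z i.castSucc) * p x (z i.castSucc))
          - ∑ x : 𝒳, f x (z i.succ) * p x (z i.succ)) := by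
  set w : 𝒳 × Fin (n + 1) → ℝ := fun q => ftil q.1 (z q.2)
  have hwS : w ∈ monotoneInSnd 𝒳 (Fin (n + 1)) := fun x _ _ hij => hmono x _ _ hij
  have hw : IsMinOn (fun v => ∑ q, (f q.1 (z q.2) - v q) ^ 2)
      (monotoneInSnd 𝒳 (Fin (n + 1))) w := by
    intro v hv
    have hzinv := leftInverse_invFun hz.injective
    simpa [Fintype.sum_prod_type, hzinv _] using
      hmin (fun x r => v (x, invFun z r)) fun x i j hij => by simpa [hzinv _] using hv x hij
  have htop := le_of_isMinOn_monotoneInSnd_of_isMax hw hwS (a := Fin.last n) fun b _ => b.le_last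
  have hbot := le_of_isMinOn_monotoneInSnd_of_isMin hw hwS (a := 0) fun b _ => b.zero_le
  rw [Fin.sum_univ_castSucc_sub_succ (fun i => ∑ x, ftil x (z i) * p x (z i)),
    Fin.sum_univ_castSucc_sub_succ (fun i => ∑ x, f x (z i) * p x (z i))]
  gcongr with x _ x _
  · exact hp0 x 0
  · exact hbot x
  · exact hp0 x _
  · exact htop x

/-- Lemma 2: the least-squares projection `ftil` of `f` onto the class of functions
monotonically nondecreasing in the protected attribute `Z` cannot have a worse *average*
one-sided statistical parity violation than `f`.  Here `z 0 < z 1 < ... < z n` enumerates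
the `m = n + 1` elements of `𝒵 ⊆ ℝ` in nondecreasing order,
`p x (z i) = P(X = x | Z = z i)` are conditional probabilities summing to one for each
group, `E[g(X,Z) | Z = z] = ∑ x, g x z * p x z`, and
`R_g = (1/m) ∑_{i=1}^{m-1} (E[g|Z=z_(i)] - E[g|Z=z_(i+1)])`. -/
theorem monotone_projection_average_parity_violation_le
    {𝒳 : Type*} [Fintype 𝒳]
    (n : ℕ) (z : Fin (n + 1) → ℝ) (hz : StrictMono z)
    (p : 𝒳 → ℝ → ℝ)
    (hp0 : ∀ (x : 𝒳) (i : Fin (n + 1)), 0 ≤ p x (z i))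
    (hp1 : ∀ (x : 𝒳) (i : Fin (n + 1)), p x (z i) ≤ 1)
    (hpsum : ∀ i : Fin (n + 1), ∑ x : 𝒳, p x (z i) = 1)
    (f ftil : 𝒳 → ℝ → ℝ)
    (hmono : ∀ (x : 𝒳) (i j : Fin (n + 1)), i ≤ j → ftil x (z i) ≤ ftil x (z j))
    (hmin : ∀ g : 𝒳 → ℝ → ℝ,
      (∀ (x : 𝒳) (i j : Fin (n + 1)), i ≤ j → g x (z i) ≤ g x (z j)) →
      (∑ x : 𝒳, ∑ i : Fin (n + 1), (f x (z i) - ftil x (z i)) ^ 2)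
        ≤ ∑ x : 𝒳, ∑ i : Fin (n + 1), (f x (z i) - g x (z i)) ^ 2) :
    (1 / (n + 1 : ℝ)) * ∑ i : Fin n,
        ((∑ x : 𝒳, ftil x (z i.castSucc) * p x (z i.castSucc))
          - ∑ x : 𝒳, ftil x (z i.succ) * p x (z i.succ))
      ≤ (1 / (n + 1 : ℝ)) * ∑ i : Fin n,
        ((∑ x : 𝒳, f x (z i.castSucc) * p x (z i.castSucc))
          - ∑ x : 𝒳, f x (z i.succ) * p x (z i.succ)) :=
  monotone_projection_average_parity_violation_le_general n z hz p hp0 f ftil hmono hmin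
end

section
/- Let (Ω, F, P) be a probability space with P a probability measure on a finite (or countable) sample space, and let X : Ω → 𝒳, Z : Ω → 𝒵, Ŷ : Ω → {0,1} be random variables with 𝒳, 𝒵 finite. Fix j, k ∈ 𝒵 and a nonempty set S ⊆ 𝒳 such that for all x ∈ S and z ∈ {j, k}, P(X = x, Ŷ = 1, Z = z) > 0. Suppose that for every x ∈ S, P(Ŷ = 1 | X = x, Z = j) ≤ P(Ŷ = 1 | X = x, Z = k). Then for every x ∈ S, P(Ŷ = 1 | Z = j) · P(X = x | Z = k) · P(X = x | Ŷ = 1, Z = j) ≤ P(Ŷ = 1 | Z = k) · P(X = x | Z = j) · P(X = x | Ŷ = 1, Z = k); equivalently, P(Ŷ = 1 | Z = j) / P(Ŷ = 1 | Z = k) ≤ inf over x ∈ S of [ P(X = x | Z = j) · P(X = x | Ŷ = 1, Z = k) ] / [ P(X = x | Z = k) · P(X = x | Ŷ = 1, Z = j) ]. -/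
open Classical in
noncomputable def pr {Ω : Type*} [Fintype Ω] (P : Ω → ℝ) (A : Ω → Prop) : ℝ :=
  ∑ ω : Ω, if A ω then P ω else 0

/-- Conditional probability `P(B | A)` under the probability mass function `P`. -/
noncomputable def condPr {Ω : Type*} [Fintype Ω] (P : Ω → ℝ) (A B : Ω → Prop) : ℝ :=
  pr P (fun ω => A ω ∧ B ω) / pr P A

/-! By the chain rule, `P(Ŷ=1 | Z=z) · P(X=x | Ŷ=1, Z=z) = P(Ŷ=1 | X=x, Z=z) · P(X=x | Z=z)`
for `z = j, k`. Substituting this on both sides, the claimed inequality becomes the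
monotonicity hypothesis multiplied by the nonnegative factor `P(X=x | Z=j) · P(X=x | Z=k)`. -/

section

variable {Ω : Type*} [Fintype Ω] (P : Ω → ℝ)

theorem pr_congr {A B : Ω → Prop} (h : ∀ ω, A ω ↔ B ω) : pr P A = pr P B :=
  congrArg (pr P) (funext fun ω => propext (h ω))

variable {P}

theorem pr_nonneg (hP0 : ∀ ω, 0 ≤ P ω) (A : Ω → Prop) : 0 ≤ pr P A := by
  classical
  exact Finset.sum_nonneg fun ω _ => by split_ifs <;> simp [hP0 ω]

theorem pr_mono (hP0 : ∀ ω, 0 ≤ P ω) {A B : Ω → Prop} (h : ∀ ω, A ω → B ω) :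
    pr P A ≤ pr P B := by
  classical
  refine Finset.sum_le_sum fun ω _ => ?_
  by_cases hA : A ω
  · simp [hA, h ω hA]
  · simp only [hA, if_false]
    split_ifs <;> simp [hP0 ω]

theorem condPr_nonneg (hP0 : ∀ ω, 0 ≤ P ω) (A B : Ω → Prop) : 0 ≤ condPr P A B :=
  div_nonneg (pr_nonneg hP0 _) (pr_nonneg hP0 _)

theorem condPr_mul_condPr {A B C : Ω → Prop} (h : pr P (fun ω => B ω ∧ A ω) ≠ 0) :
    condPr P A B * condPr P (fun ω => B ω ∧ A ω) C = condPr P A (fun ω => B ω ∧ C ω) := by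
  unfold condPr
  rw [pr_congr P (fun ω => and_comm : ∀ ω, A ω ∧ B ω ↔ B ω ∧ A ω),
    pr_congr P (fun ω => and_assoc.trans and_left_comm :
      ∀ ω, (B ω ∧ A ω) ∧ C ω ↔ A ω ∧ B ω ∧ C ω)]
  field_simp

theorem condPr_mul_condPr_comm {G B C : Ω → Prop} (hB : pr P (fun ω => B ω ∧ G ω) ≠ 0)
    (hC : pr P (fun ω => C ω ∧ G ω) ≠ 0) :
    condPr P G B * condPr P (fun ω => B ω ∧ G ω) C
      = condPr P G C * condPr P (fun ω => C ω ∧ G ω) B := by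
  rw [condPr_mul_condPr hB, condPr_mul_condPr hC]
  exact congrArg (condPr P G) (funext fun ω => propext and_comm)

theorem condPr_mul_condPr_mul_condPr_le (hP0 : ∀ ω, 0 ≤ P ω) {E Y G₁ G₂ : Ω → Prop}
    (hpos₁ : 0 < pr P (fun ω => E ω ∧ Y ω ∧ G₁ ω))
    (hpos₂ : 0 < pr P (fun ω => E ω ∧ Y ω ∧ G₂ ω))
    (hmono : condPr P (fun ω => E ω ∧ G₁ ω) Y ≤ condPr P (fun ω => E ω ∧ G₂ ω) Y) :
    condPr P G₁ Y * condPr P G₂ E * condPr P (fun ω => Y ω ∧ G₁ ω) E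
      ≤ condPr P G₂ Y * condPr P G₁ E * condPr P (fun ω => Y ω ∧ G₂ ω) E := by
  have chain_rule (G : Ω → Prop) (hpos : 0 < pr P (fun ω => E ω ∧ Y ω ∧ G ω)) :
      condPr P G Y * condPr P (fun ω => Y ω ∧ G ω) E
        = condPr P G E * condPr P (fun ω => E ω ∧ G ω) Y :=
    condPr_mul_condPr_comm
      (hpos.trans_le (pr_mono hP0 fun _ h => h.2)).ne'
      (hpos.trans_le (pr_mono hP0 fun _ h => ⟨h.1, h.2.2⟩)).ne'
  have hE : 0 ≤ condPr P G₁ E * condPr P G₂ E :=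
    mul_nonneg (condPr_nonneg hP0 _ _) (condPr_nonneg hP0 _ _)
  calc condPr P G₁ Y * condPr P G₂ E * condPr P (fun ω => Y ω ∧ G₁ ω) E
      = condPr P (fun ω => E ω ∧ G₁ ω) Y * (condPr P G₁ E * condPr P G₂ E) := by
        rw [mul_right_comm, chain_rule G₁ hpos₁]; ring
    _ ≤ condPr P (fun ω => E ω ∧ G₂ ω) Y * (condPr P G₁ E * condPr P G₂ E) :=
        mul_le_mul_of_nonneg_right hmono hE
    _ = condPr P G₂ Y * condPr P G₁ E * condPr P (fun ω => Y ω ∧ G₂ ω) E := by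
        rw [mul_right_comm, chain_rule G₂ hpos₂]; ring

end

theorem binary_classifier_one_sided_statistical_parity_bound_general
    {Ω 𝒳 𝒵 : Type*} [Fintype Ω]
    (P : Ω → ℝ) (hP0 : ∀ ω, 0 ≤ P ω)
    (X : Ω → 𝒳) (Z : Ω → 𝒵) (Yhat : Ω → Fin 2)
    (j k : 𝒵) (S : Finset 𝒳)
    (hposj : ∀ x ∈ S, 0 < pr P (fun ω => X ω = x ∧ Yhat ω = 1 ∧ Z ω = j))
    (hposk : ∀ x ∈ S, 0 < pr P (fun ω => X ω = x ∧ Yhat ω = 1 ∧ Z ω = k))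
    (hmono : ∀ x ∈ S,
      condPr P (fun ω => X ω = x ∧ Z ω = j) (fun ω => Yhat ω = 1)
        ≤ condPr P (fun ω => X ω = x ∧ Z ω = k) (fun ω => Yhat ω = 1)) :
    ∀ x ∈ S,
      condPr P (fun ω => Z ω = j) (fun ω => Yhat ω = 1)
          * condPr P (fun ω => Z ω = k) (fun ω => X ω = x)
          * condPr P (fun ω => Yhat ω = 1 ∧ Z ω = j) (fun ω => X ω = x)
        ≤ condPr P (fun ω => Z ω = k) (fun ω => Yhat ω = 1)
          * condPr P (fun ω => Z ω = j) (fun ω => X ω = x)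
          * condPr P (fun ω => Yhat ω = 1 ∧ Z ω = k) (fun ω => X ω = x) :=
  fun x hx => condPr_mul_condPr_mul_condPr_le hP0 (hposj x hx) (hposk x hx) (hmono x hx)

/-- Lemma 3: for a binary classifier `Ŷ` that is monotonic between the groups `Z = j` and
`Z = k` on a set `S` of feature values with positive joint probability, for every
`x ∈ S` we have
`P(Ŷ=1|Z=j) · P(X=x|Z=k) · P(X=x|Ŷ=1,Z=j) ≤ P(Ŷ=1|Z=k) · P(X=x|Z=j) · P(X=x|Ŷ=1,Z=k)`,
i.e. the one-sided statistical parity ratio `P(Ŷ=1|Z=j)/P(Ŷ=1|Z=k)` is bounded by the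
infimum over `x ∈ S` of `(P(X=x|Z=j) P(X=x|Ŷ=1,Z=k)) / (P(X=x|Z=k) P(X=x|Ŷ=1,Z=j))`. -/
theorem binary_classifier_one_sided_statistical_parity_bound
    {Ω 𝒳 𝒵 : Type*} [Fintype Ω] [Fintype 𝒳] [Fintype 𝒵]
    (P : Ω → ℝ) (hP0 : ∀ ω, 0 ≤ P ω) (hP1 : ∑ ω : Ω, P ω = 1)
    (X : Ω → 𝒳) (Z : Ω → 𝒵) (Yhat : Ω → Fin 2)
    (j k : 𝒵) (S : Finset 𝒳) (hS : S.Nonempty)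
    (hposj : ∀ x ∈ S, 0 < pr P (fun ω => X ω = x ∧ Yhat ω = 1 ∧ Z ω = j))
    (hposk : ∀ x ∈ S, 0 < pr P (fun ω => X ω = x ∧ Yhat ω = 1 ∧ Z ω = k))
    (hmono : ∀ x ∈ S,
      condPr P (fun ω => X ω = x ∧ Z ω = j) (fun ω => Yhat ω = 1)
        ≤ condPr P (fun ω => X ω = x ∧ Z ω = k) (fun ω => Yhat ω = 1)) :
    ∀ x ∈ S,
      condPr P (fun ω => Z ω = j) (fun ω => Yhat ω = 1)
          * condPr P (fun ω => Z ω = k) (fun ω => X ω = x)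
          * condPr P (fun ω => Yhat ω = 1 ∧ Z ω = j) (fun ω => X ω = x)
        ≤ condPr P (fun ω => Z ω = k) (fun ω => Yhat ω = 1)
          * condPr P (fun ω => Z ω = j) (fun ω => X ω = x)
          * condPr P (fun ω => Yhat ω = 1 ∧ Z ω = k) (fun ω => X ω = x) :=
  binary_classifier_one_sided_statistical_parity_bound_general P hP0 X Z Yhat j k S hposj hposk
    hmono
end

section
/- There exist a finite set 𝒳 ⊆ ℝ (of feature values, e.g., heights), two groups labeled j and k, a conditional probability assignment p : 𝒳 × {j,k} → [0,1] with Σ_{x ∈ 𝒳} p(x, z) = 1 for z ∈ {j,k} and p(x, j) = p(x, k) for all x (so the maximum likelihood ratio C equals 1), and a binary classifier given by conditional acceptance probabilities q : 𝒳 × {j,k} → [0,1], such that: (i) statistical parity holds, i.e., Σ_{x ∈ 𝒳} q(x, j) p(x, j) = Σ_{x ∈ 𝒳} q(x, k) p(x, k); and (ii) there is no constant C' > 0 such that q(x, j) ≤ C' · q(x, k) for all x ∈ 𝒳, and no constant C' > 0 such that q(x, k) ≤ C' · q(x, j) for all x ∈ 𝒳. Concretely, this holds when q(x, j) = 1 exactly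 for x above a threshold h and q(x, k) = 1 exactly for x below h, with the two halves having equal probability mass. -/
/-! Take two equally likely feature values `0 < 1` in both groups and the threshold `1/2`:
group `j` accepts exactly at `1`, group `k` exactly at `0`. Both acceptance rates are `1/2`,
but at `1` one classifier accepts surely while the other never does, and vice versa at `0`,
which no multiplicative bound in either direction allows. -/

open Finset

theorem not_exists_pos_mul_bound_of_pos_of_eq_zero {α : Type*} {s : Finset α} {f g : α → ℝ}
    {a : α} (ha : a ∈ s) (hfa : 0 < f a) (hga : g a = 0) :
    ¬ ∃ C : ℝ, 0 < C ∧ ∀ x ∈ s, f x ≤ C * g x := by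
  rintro ⟨C, -, hC⟩
  have := hC a ha
  rw [hga, mul_zero] at this
  exact this.not_gt hfa

theorem sum_indicator_mul_eq_sum_ite {α : Type*} (s : Finset α) (P : α → Prop)
    [DecidablePred P] (p : α → ℝ) :
    ∑ x ∈ s, (if P x then 1 else 0) * p x = ∑ x ∈ s, if P x then p x else 0 := by
  simp only [ite_mul, one_mul, zero_mul]

/-- Statistical parity does not imply any bound on monotonicity violations: there exist a
finite set `𝒳 ⊆ ℝ` of feature values, identical conditional feature distributions for
the two groups `j` and `k` (`pj = pk`, so the maximum likelihood ratio is `C = 1`), and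
conditional acceptance probabilities `qj, qk` of a binary classifier
(`q z x = P(Ŷ = 1 | X = x, Z = z)`) such that (i) statistical parity holds
(`∑ x, qj x * pj x = ∑ x, qk x * pk x`, i.e. equal group acceptance rates), yet (ii) no
constant `C' > 0` satisfies `qj x ≤ C' * qk x` for all `x ∈ 𝒳`, nor `qk x ≤ C' * qj x`
for all `x ∈ 𝒳`.  Concretely this is realized by a threshold `h`: `qj x = 1` exactly for
`x` above `h`, `qk x = 1` exactly for `x` below `h`, with the two halves carrying equal
probability mass. -/
theorem statistical_parity_does_not_bound_monotonicity_violation :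
    ∃ (𝒳 : Finset ℝ) (pj pk qj qk : ℝ → ℝ),
      𝒳.Nonempty ∧
      (∀ x ∈ 𝒳, 0 ≤ pj x ∧ pj x ≤ 1) ∧
      (∀ x ∈ 𝒳, 0 ≤ pk x ∧ pk x ≤ 1) ∧
      (∑ x ∈ 𝒳, pj x = 1) ∧
      (∑ x ∈ 𝒳, pk x = 1) ∧
      (∀ x ∈ 𝒳, pj x = pk x) ∧
      (∀ x ∈ 𝒳, 0 ≤ qj x ∧ qj x ≤ 1) ∧
      (∀ x ∈ 𝒳, 0 ≤ qk x ∧ qk x ≤ 1) ∧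
      (∑ x ∈ 𝒳, qj x * pj x = ∑ x ∈ 𝒳, qk x * pk x) ∧
      (¬ ∃ C' : ℝ, 0 < C' ∧ ∀ x ∈ 𝒳, qj x ≤ C' * qk x) ∧
      (¬ ∃ C' : ℝ, 0 < C' ∧ ∀ x ∈ 𝒳, qk x ≤ C' * qj x) ∧
      (∃ h : ℝ,
        (∀ x ∈ 𝒳, qj x = if h < x then 1 else 0) ∧
        (∀ x ∈ 𝒳, qk x = if x < h then 1 else 0) ∧
        (∑ x ∈ 𝒳, if h < x then pj x else 0)
          = ∑ x ∈ 𝒳, if x < h then pk x else 0) := by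
  have halves : (∑ x ∈ ({0, 1} : Finset ℝ), if (1 / 2 : ℝ) < x then (1 / 2 : ℝ) else 0)
      = ∑ x ∈ ({0, 1} : Finset ℝ), if x < 1 / 2 then 1 / 2 else 0 := by
    norm_num
  refine ⟨{0, 1}, fun _ => 1 / 2, fun _ => 1 / 2,
    fun x => if 1 / 2 < x then 1 else 0, fun x => if x < 1 / 2 then 1 else 0,
    insert_nonempty _ _, fun _ _ => by norm_num, fun _ _ => by norm_num,
    by norm_num, by norm_num, fun _ _ => rfl,
    fun _ _ => by dsimp only; split_ifs <;> norm_num,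
    fun _ _ => by dsimp only; split_ifs <;> norm_num,
    ?parity, ?_, ?_, ⟨1 / 2, fun _ _ => rfl, fun _ _ => rfl, halves⟩⟩
  case parity =>
    simpa only [sum_indicator_mul_eq_sum_ite] using halves
  · exact not_exists_pos_mul_bound_of_pos_of_eq_zero (a := 1) (by simp) (by norm_num)
      (by norm_num)
  · exact not_exists_pos_mul_bound_of_pos_of_eq_zero (a := 0) (by simp) (by norm_num)
      (by norm_num)
end

section
/- There exist finite sets 𝒳 and 𝒵 ⊆ ℝ with |𝒵| > 2, a function f : 𝒳 × 𝒵 → ℝ, a conditional probability assignment p : 𝒳 × 𝒵 → [0,1] with Σ_{x ∈ 𝒳} p(x, z) = 1 for each z, and a pair j < k in 𝒵, such that if f̃ denotes the minimizer of Σ_{x,z} (f(x,z) − f'(x,z))² over all f' : 𝒳 × 𝒵 → ℝ satisfying f'(x, a) ≤ f'(x, b) for all x ∈ 𝒳 and all a ≤ b in 𝒵, then E[f̃(X,Z) | Z = j] − E[f̃(X,Z) | Z = k] > E[f(X,Z) | Z = j] − E[f(X,Z) | Z = k] > 0, where E[g(X,Z) | Z = z] = Σ_{x ∈ 𝒳}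 g(x, z) p(x, z). In particular, one may take 𝒳 = {0,1} and 𝒵 = {0,1,2,3}, with the projection's violation between z = 1 and z = 2 equal to 1.2 while the original model's violation equals 0.85. -/
/-!
In the example the model is already monotone in `z` for `x = 0`, while for `x = 1` its values
`1, 0.3` at `z = 2, 3` violate monotonicity; the least-squares projection pools them to their
mean `0.65` (pool adjacent violators) and leaves everything else unchanged.  The conditional
distribution puts `X = 1` at `Z = 2` and `X = 0` at every other `Z`, so the parity violation
between `z = 1` and `z = 2` compares `f(0,1) = 1.85` with `f(1,2)`; pooling lowers the latter
from `1` to `0.65` and so raises the violation from `0.85` to `1.2`.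
-/

/-- Pooling two out-of-order values `a ≥ b` to their mean is optimal among ordered pairs. -/
theorem half_sq_sub_le_sq_add_sq_of_le {a b u v : ℝ} (hba : b ≤ a) (huv : u ≤ v) :
    (a - b) ^ 2 / 2 ≤ (a - u) ^ 2 + (b - v) ^ 2 := by
  have hgap : a - b ≤ (a - u) - (b - v) := by linarith
  have hsq : (a - b) ^ 2 ≤ ((a - u) - (b - v)) ^ 2 :=
    pow_le_pow_left₀ (sub_nonneg.mpr hba) hgap 2
  nlinarith [sq_nonneg ((a - u) + (b - v))]

noncomputable section

namespace MonotoneParityExample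

local notation "𝒳" => ({0, 1} : Finset ℝ)
local notation "𝒵" => ({0, 1, 2, 3} : Finset ℝ)

def IsMonotoneInGroup (g : ℝ → ℝ → ℝ) : Prop :=
  ∀ x ∈ 𝒳, ∀ a ∈ 𝒵, ∀ b ∈ 𝒵, a ≤ b → g x a ≤ g x b

def sqError (f g : ℝ → ℝ → ℝ) : ℝ :=
  ∑ x ∈ 𝒳, ∑ z ∈ 𝒵, (f x z - g x z) ^ 2

def condMean (p g : ℝ → ℝ → ℝ) (z : ℝ) : ℝ :=
  ∑ x ∈ 𝒳, g x z * p x z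

def parityViolation (p g : ℝ → ℝ → ℝ) (j k : ℝ) : ℝ :=
  condMean p g j - condMean p g k

def model (x z : ℝ) : ℝ :=
  if x = 0 then (if z ≤ 0 then 0 else 1.85) else (if z = 2 then 1 else if z = 3 then 0.3 else 0)

def projection (x z : ℝ) : ℝ :=
  if x = 0 then (if z ≤ 0 then 0 else 1.85) else (if z ≤ 1 then 0 else 0.65)

def condProb (x z : ℝ) : ℝ :=
  if z = 2 then (if x = 0 then 0 else 1) else (if x = 0 then 1 else 0)

theorem condProb_mem_Icc : ∀ x ∈ 𝒳, ∀ z ∈ 𝒵, 0 ≤ condProb x z ∧ condProb x z ≤ 1 := by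
  intro x hx z hz
  simp only [Finset.mem_insert, Finset.mem_singleton] at hx hz
  rcases hx with rfl | rfl <;> rcases hz with rfl | rfl | rfl | rfl <;> norm_num [condProb]

theorem sum_condProb : ∀ z ∈ 𝒵, ∑ x ∈ 𝒳, condProb x z = 1 := by
  intro z hz
  simp only [Finset.mem_insert, Finset.mem_singleton] at hz
  rcases hz with rfl | rfl | rfl | rfl <;> norm_num [condProb]

theorem isMonotoneInGroup_projection : IsMonotoneInGroup projection := by
  intro x hx a ha b hb hab
  simp only [Finset.mem_insert, Finset.mem_singleton] at hx ha hb
  rcases hx with rfl | rfl <;> rcases ha with rfl | rfl | rfl | rfl <;>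
    rcases hb with rfl | rfl | rfl | rfl <;> (revert hab; norm_num [projection])

theorem sqError_model_projection : sqError model projection = (1 - 0.3) ^ 2 / 2 := by
  norm_num [sqError, model, projection]

theorem sqError_model_projection_le {g : ℝ → ℝ → ℝ} (hg : IsMonotoneInGroup g) :
    sqError model projection ≤ sqError model g := by
  have hpooled : (1 - 0.3) ^ 2 / 2 ≤ (1 - g 1 2) ^ 2 + (0.3 - g 1 3) ^ 2 :=
    half_sq_sub_le_sq_add_sq_of_le (by norm_num)
      (hg 1 (by simp) 2 (by simp) 3 (by simp) (by norm_num))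
  rw [sqError_model_projection]
  norm_num [sqError, model] at hpooled ⊢
  nlinarith [sq_nonneg (g 0 0), sq_nonneg (1.85 - g 0 1), sq_nonneg (1.85 - g 0 2),
    sq_nonneg (1.85 - g 0 3), sq_nonneg (g 1 0), sq_nonneg (g 1 1)]

theorem parityViolation_projection : parityViolation condProb projection 1 2 = 1.2 := by
  norm_num [parityViolation, condMean, condProb, projection]

theorem parityViolation_model : parityViolation condProb model 1 2 = 0.85 := by
  norm_num [parityViolation, condMean, condProb, model]

end MonotoneParityExample

end

open MonotoneParityExample in
/-- Monotonic projection can be more unfair in the worst case: with `𝒳 = {0,1}` and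
`𝒵 = {0,1,2,3} ⊆ ℝ` (so `|𝒵| > 2`), there exist a model `f`, conditional probabilities
`p x z = P(X = x | Z = z)` summing to one for each `z`, and a least-squares projection
`ftil` of `f` onto the functions monotonically nondecreasing in the second argument on
`𝒵`, such that for the pair `j = 1 < 2 = k` the one-sided statistical parity violation
of the projection strictly exceeds that of the original model, which is itself positive:
the projection's violation equals `1.2` while the original model's equals `0.85`.  Here
`E[g(X,Z) | Z = z] = ∑ x, g x z * p x z`. -/
theorem monotone_projection_can_worsen_pairwise_parity_violation :
    ∃ f ftil p : ℝ → ℝ → ℝ,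
      (∀ x ∈ ({0, 1} : Finset ℝ), ∀ z ∈ ({0, 1, 2, 3} : Finset ℝ),
        0 ≤ p x z ∧ p x z ≤ 1) ∧
      (∀ z ∈ ({0, 1, 2, 3} : Finset ℝ), ∑ x ∈ ({0, 1} : Finset ℝ), p x z = 1) ∧
      (∀ x ∈ ({0, 1} : Finset ℝ), ∀ a ∈ ({0, 1, 2, 3} : Finset ℝ),
        ∀ b ∈ ({0, 1, 2, 3} : Finset ℝ), a ≤ b → ftil x a ≤ ftil x b) ∧
      (∀ g : ℝ → ℝ → ℝ,
        (∀ x ∈ ({0, 1} : Finset ℝ), ∀ a ∈ ({0, 1, 2, 3} : Finset ℝ),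
          ∀ b ∈ ({0, 1, 2, 3} : Finset ℝ), a ≤ b → g x a ≤ g x b) →
        (∑ x ∈ ({0, 1} : Finset ℝ), ∑ z ∈ ({0, 1, 2, 3} : Finset ℝ),
            (f x z - ftil x z) ^ 2)
          ≤ ∑ x ∈ ({0, 1} : Finset ℝ), ∑ z ∈ ({0, 1, 2, 3} : Finset ℝ),
            (f x z - g x z) ^ 2) ∧
      ((∑ x ∈ ({0, 1} : Finset ℝ), ftil x 1 * p x 1)
          - (∑ x ∈ ({0, 1} : Finset ℝ), ftil x 2 * p x 2)
        > (∑ x ∈ ({0, 1} : Finset ℝ), f x 1 * p x 1)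
          - (∑ x ∈ ({0, 1} : Finset ℝ), f x 2 * p x 2)) ∧
      ((∑ x ∈ ({0, 1} : Finset ℝ), f x 1 * p x 1)
          - (∑ x ∈ ({0, 1} : Finset ℝ), f x 2 * p x 2) > 0) ∧
      ((∑ x ∈ ({0, 1} : Finset ℝ), ftil x 1 * p x 1)
          - (∑ x ∈ ({0, 1} : Finset ℝ), ftil x 2 * p x 2) = 1.2) ∧
      ((∑ x ∈ ({0, 1} : Finset ℝ), f x 1 * p x 1)
          - (∑ x ∈ ({0, 1} : Finset ℝ), f x 2 * p x 2) = 0.85) := by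
  refine ⟨model, projection, condProb, condProb_mem_Icc, sum_condProb,
    isMonotoneInGroup_projection, fun g hg => sqError_model_projection_le hg,
    ?_, ?_, parityViolation_projection, parityViolation_model⟩
  · change parityViolation condProb projection 1 2 > parityViolation condProb model 1 2
    rw [parityViolation_projection, parityViolation_model]
    norm_num
  · change parityViolation condProb model 1 2 > 0
    rw [parityViolation_model]
    norm_num
end
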